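/- arXiv:2407.00425 — 3 statements merged into one kernel-verified Lean document; each statement's English description precedes it below -/
import Mathlib

section
/- In the case b = 0, with denominator function ψ² = (hε/a)(exp(ah/ε) - 1), every sequence of the form uᵢ = A + B·exp(-a·i·h/ε) satisfies ε·(u_{i-1} - 2uᵢ + u_{i+1})/ψ² + a·(u_{i+1} - uᵢ)/h = 0 for all i; that is, the nonstandard scheme is exact for ε u'' + a u' = 0. -/
theorem stmt_2 (ε a h A B : ℝ) (hε : 0 < ε) (ha : 0 < a) (hh : 0 < h)
    (ψsq : ℝ) (hψ : ψsq = (h * ε / a) * (Real.exp (a * h / ε) - 1))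
    (u : ℤ → ℝ)
    (hu : ∀ i : ℤ, u i = A + B * Real.exp (-(a * i * h) / ε)) :
    ∀ i : ℤ,
      ε * (u (i - 1) - 2 * u i + u (i + 1)) / ψsq
        + a * (u (i + 1) - u i) / h = 0 := by
  intro i
  have hεne : ε ≠ 0 := ne_of_gt hε
  have hane : a ≠ 0 := ne_of_gt ha
  have hhne : h ≠ 0 := ne_of_gt hh
  have hE1 : (1:ℝ) < Real.exp (a * h / ε) := by
    rw [show (1:ℝ) = Real.exp 0 by simp]
    exact Real.exp_lt_exp.mpr (by positivity)
  have hEne : Real.exp (a * h / ε) ≠ 0 := (Real.exp_pos _).ne'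
  have hψne : ψsq ≠ 0 := by
    rw [hψ]
    have : Real.exp (a * h / ε) - 1 > 0 := by linarith
    positivity
  have h1 : Real.exp (-(a * ((i : ℝ) - 1) * h) / ε)
      = Real.exp (-(a * i * h) / ε) * Real.exp (a * h / ε) := by
    rw [← Real.exp_add]
    congr 1
    field_simp
    ring
  have h2 : Real.exp (-(a * ((i : ℝ) + 1) * h) / ε)
      = Real.exp (-(a * i * h) / ε) / Real.exp (a * h / ε) := by
    rw [eq_div_iff hEne, ← Real.exp_add]
    congr 1
    field_simp
    ring
  rw [hu (i - 1), hu i, hu (i + 1)]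
  push_cast
  have hEm1 : Real.exp (a * h / ε) - 1 ≠ 0 := by linarith
  rw [h1, h2, hψ]
  field_simp
  ring
end

section
/- For ε > 0, h > 0, a > 0, with ψ² = (hε/a)(exp(ah/ε) - 1), the quantity ε·|h²/ψ² - 1| equals a·h·Q(ρ) where ρ = ah/ε and Q(ρ) = (exp(ρ) - ρ - 1)/(ρ(exp(ρ) - 1)); consequently ε·|h²/ψ² - 1| ≤ (a/2)·h. -/
lemma key_ineq : ∀ x : ℝ, 0 ≤ x → (2 - x) * Real.exp x ≤ 2 + x := by
  intro x hx
  have hf : ∀ y : ℝ, HasDerivAt (fun t => (2 + t) - (2 - t) * Real.exp t)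
      (1 - (1 - y) * Real.exp y) y := by
    intro y
    have h1 : HasDerivAt (fun t : ℝ => 2 + t) 1 y := by
      simpa using (hasDerivAt_id y).const_add 2
    have h2 : HasDerivAt (fun t : ℝ => 2 - t) (-1) y := by
      simpa using (hasDerivAt_id y).const_sub 2
    have h3 := (h2.mul (Real.hasDerivAt_exp y))
    have := h1.sub h3
    exact this.congr_deriv (by ring)
  have hmono : MonotoneOn (fun t : ℝ => (2 + t) - (2 - t) * Real.exp t) (Set.Ici 0) := by
    apply monotoneOn_of_deriv_nonneg (convex_Ici 0)
    · exact (Continuous.continuousOn (by continuity))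
    · intro y hy
      exact (hf y).differentiableAt.differentiableWithinAt
    · intro y hy
      rw [(hf y).deriv]
      have h4 : 1 - y ≤ Real.exp (-y) := by
        have := Real.add_one_le_exp (-y); linarith
      have h5 : (1 - y) * Real.exp y ≤ Real.exp (-y) * Real.exp y :=
        mul_le_mul_of_nonneg_right h4 (Real.exp_pos y).le
      rw [← Real.exp_add] at h5
      simp at h5
      linarith
  have h0 := hmono (Set.self_mem_Ici) (Set.mem_Ici.mpr hx) hx
  simp at h0
  linarith

theorem stmt_6 (ε h a : ℝ) (hε : 0 < ε) (hh : 0 < h) (ha : 0 < a)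
    (ψsq ρ : ℝ)
    (hψ : ψsq = (h * ε / a) * (Real.exp (a * h / ε) - 1))
    (hρ : ρ = a * h / ε) :
    ε * |h ^ 2 / ψsq - 1|
        = a * h * ((Real.exp ρ - ρ - 1) / (ρ * (Real.exp ρ - 1))) ∧
    ε * |h ^ 2 / ψsq - 1| ≤ (a / 2) * h := by
  have hρpos : 0 < ρ := by rw [hρ]; positivity
  have hexp : 0 < Real.exp ρ - 1 := by
    have := Real.add_one_le_exp ρ
    have h2 := Real.add_one_le_exp (ρ / 2)
    nlinarith [Real.exp_pos ρ, Real.add_one_lt_exp (x := ρ) (by positivity)]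
  have hnum : 0 ≤ Real.exp ρ - ρ - 1 := by
    have := Real.add_one_le_exp ρ; linarith
  have hρε : ρ * ε = a * h := by rw [hρ]; field_simp
  have hdiv : h ^ 2 / ψsq = ρ / (Real.exp ρ - 1) := by
    rw [hψ]
    rw [show a * h / ε = ρ from hρ.symm]
    field_simp
    linear_combination -hρε
  have habs : |h ^ 2 / ψsq - 1| = (Real.exp ρ - ρ - 1) / (Real.exp ρ - 1) := by
    rw [hdiv]
    rw [abs_of_nonpos]
    · field_simp
      ring
    · rw [sub_nonpos, div_le_one hexp]
      linarith
  have heq : ε * |h ^ 2 / ψsq - 1|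
      = a * h * ((Real.exp ρ - ρ - 1) / (ρ * (Real.exp ρ - 1))) := by
    rw [habs, ← hρε]
    have hene : Real.exp ρ - 1 ≠ 0 := ne_of_gt hexp
    have hρne : ρ ≠ 0 := ne_of_gt hρpos
    field_simp
  refine ⟨heq, ?_⟩
  rw [heq]
  have hQ : (Real.exp ρ - ρ - 1) / (ρ * (Real.exp ρ - 1)) ≤ 1 / 2 := by
    rw [div_le_div_iff₀ (by positivity) (by norm_num)]
    have := key_ineq ρ hρpos.le
    nlinarith
  calc a * h * ((Real.exp ρ - ρ - 1) / (ρ * (Real.exp ρ - 1)))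
      ≤ a * h * (1 / 2) := by
        apply mul_le_mul_of_nonneg_left hQ (by positivity)
    _ = a / 2 * h := by ring
end

section
/- Stability bound: Under the hypotheses of the discrete minimum principle (ε > 0, ψᵢ² > 0, aᵢ > 0, h > 0, bᵢ ≥ β > 0), any mesh function u : {0, ..., N} → ℝ satisfies |uᵢ| ≤ β⁻¹ · max_{1≤j≤N-1} |L^N uⱼ| + max(|u₀|, |u_N|) for all i. -/
theorem stmt_10 (N : ℕ) (hN : 2 ≤ N) (ε hstep β : ℝ)
    (hε : 0 < ε) (hhstep : 0 < hstep) (hβ : 0 < β)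
    (ψsq a b : ℕ → ℝ)
    (hψ : ∀ i, 1 ≤ i → i ≤ N - 1 → 0 < ψsq i)
    (ha : ∀ i, 1 ≤ i → i ≤ N - 1 → 0 < a i)
    (hb : ∀ i, 1 ≤ i → i ≤ N - 1 → β ≤ b i)
    (u : ℕ → ℝ)
    (hne : (Finset.Icc 1 (N - 1)).Nonempty) :
    ∀ i ≤ N,
      |u i| ≤ β⁻¹ *
          (Finset.Icc 1 (N - 1)).sup' hne
            (fun j => |ε / ψsq j * (u (j + 1) - 2 * u j + u (j - 1))
              + a j / hstep * (u (j + 1) - u j) - b j * u j|)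
        + max |u 0| |u N| := by
  set L : ℕ → ℝ := fun j => ε / ψsq j * (u (j + 1) - 2 * u j + u (j - 1))
      + a j / hstep * (u (j + 1) - u j) - b j * u j with hL
  set M : ℝ := (Finset.Icc 1 (N - 1)).sup' hne (fun j => |L j|) with hM
  -- M ≥ 0
  obtain ⟨j0, hj0⟩ := hne
  have hM0 : 0 ≤ M := le_trans (abs_nonneg _) (Finset.le_sup' (fun j => |L j|) hj0)
  have hmax0 : (0:ℝ) ≤ max |u 0| |u N| := le_trans (abs_nonneg _) (le_max_left _ _)
  -- pick argmax of |u| over Icc 0 N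
  have hne' : (Finset.Icc 0 N).Nonempty := ⟨0, by simp⟩
  obtain ⟨k, hkmem, hk⟩ := Finset.exists_max_image (Finset.Icc 0 N) (fun i => |u i|) hne'
  have hkN : k ≤ N := (Finset.mem_Icc.mp hkmem).2
  have hkmax : ∀ i ≤ N, |u i| ≤ |u k| := fun i hi => hk i (Finset.mem_Icc.mpr ⟨Nat.zero_le _, hi⟩)
  have key : |u k| ≤ β⁻¹ * M + max |u 0| |u N| := by
    rcases Nat.eq_zero_or_pos k with hk0 | hk1
    · subst hk0
      calc |u 0| ≤ max |u 0| |u N| := le_max_left _ _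
        _ ≤ _ := le_add_of_nonneg_left (by positivity)
    rcases eq_or_lt_of_le hkN with hkn | hkn
    · rw [hkn]
      calc |u N| ≤ max |u 0| |u N| := le_max_right _ _
        _ ≤ _ := le_add_of_nonneg_left (by positivity)
    -- interior: 1 ≤ k ≤ N - 1
    have hk1' : 1 ≤ k := hk1
    have hkN1 : k ≤ N - 1 := Nat.le_sub_one_of_lt hkn
    have hψk := hψ k hk1' hkN1
    have hak := ha k hk1' hkN1
    have hbk := hb k hk1' hkN1
    have hA : 0 < ε / ψsq k := div_pos hε hψk
    have hB : 0 < a k / hstep := div_pos hak hhstep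
    have h1 : |u (k + 1)| ≤ |u k| := hkmax _ (by omega)
    have h2 : |u (k - 1)| ≤ |u k| := hkmax _ (by omega)
    have hLle : β * |u k| ≤ |L k| := by
      rcases le_or_gt 0 (u k) with hu | hu
      · -- u k ≥ 0 : differences ≤ 0
        have habs : |u k| = u k := abs_of_nonneg hu
        have d1 : u (k + 1) - u k ≤ 0 := by
          have := le_abs_self (u (k + 1)); linarith [habs ▸ h1]
        have d2 : u (k - 1) - u k ≤ 0 := by
          have := le_abs_self (u (k - 1)); linarith [habs ▸ h2]
        have hLk : L k ≤ -(β * u k) := by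
          have e1 : ε / ψsq k * (u (k + 1) - 2 * u k + u (k - 1)) ≤ 0 := by nlinarith
          have e2 : a k / hstep * (u (k + 1) - u k) ≤ 0 := by nlinarith
          have e3 : β * u k ≤ b k * u k := by nlinarith
          simp only [hL]; linarith
        calc β * |u k| = -(-(β * u k)) := by rw [habs]; ring
          _ ≤ -(L k) := by linarith
          _ ≤ |L k| := neg_le_abs _
      · -- u k < 0 : differences ≥ 0
        have habs : |u k| = -u k := abs_of_neg hu
        have d1 : 0 ≤ u (k + 1) - u k := by
          have := neg_abs_le (u (k + 1)); linarith [habs ▸ h1]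
        have d2 : 0 ≤ u (k - 1) - u k := by
          have := neg_abs_le (u (k - 1)); linarith [habs ▸ h2]
        have hLk : β * (-u k) ≤ L k := by
          have e1 : 0 ≤ ε / ψsq k * (u (k + 1) - 2 * u k + u (k - 1)) := by nlinarith
          have e2 : 0 ≤ a k / hstep * (u (k + 1) - u k) := by nlinarith
          have e3 : b k * u k ≤ β * u k := by nlinarith
          simp only [hL]; linarith
        calc β * |u k| = β * (-u k) := by rw [habs]
          _ ≤ L k := hLk
          _ ≤ |L k| := le_abs_self _
    have hLM : |L k| ≤ M := Finset.le_sup' (fun j => |L j|) (Finset.mem_Icc.mpr ⟨hk1', hkN1⟩)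
    have : |u k| ≤ β⁻¹ * M := by
      rw [le_inv_mul_iff₀ hβ]; linarith
    linarith
  intro i hi
  exact le_trans (hkmax i hi) key
end
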